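/- Let λ > 0 and γ, γ' ∈ ℝ with |γ' − γ| ≤ 1, and set ε := |γ' − γ|, p := Lap(λ){ y : y ≥ λγ } and p' := Lap(λ){ y : y ≥ λγ' }. Then (1 − 5ε)·p' ≤ p ≤ (1 + 5ε)·p'. -/

import Mathlib

/-!
Translating `y ↦ y + d` changes the Laplace density `exp (-|y| / l)` by a factor of
at most `exp (|d| / l)`, so shifting a tail `[b, ∞)` to `[b + d, ∞)` multiplies its
mass by at most that factor. With `d = ±l (γ' - γ)` this gives `p ≤ exp ε · p'` and
`p' ≤ exp ε · p`; the theorem follows from `exp ε ≤ 1 + 2ε` for `ε ≤ 1` and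
`1 - ε ≤ exp (-ε)`.
-/

open MeasureTheory ENNReal

/-- The Laplace distribution with parameter `l`: the measure on `ℝ` with density
`x ↦ exp(−|x|/l)/(2l)` with respect to Lebesgue measure. -/
noncomputable def lapMeasure (l : ℝ) : Measure ℝ :=
  MeasureTheory.volume.withDensity fun x => ENNReal.ofReal (Real.exp (-|x| / l) / (2 * l))

open Real Set Filter

lemma withDensity_Ici_add_le {g : ℝ → ℝ≥0∞} {C : ℝ≥0∞} {d : ℝ} (hg : Measurable g)
    (hgd : ∀ y, g (y + d) ≤ C * g y) (b : ℝ) :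
    volume.withDensity g (Ici (b + d)) ≤ C * volume.withDensity g (Ici b) := by
  rw [withDensity_apply _ measurableSet_Ici, withDensity_apply _ measurableSet_Ici,
    ← lintegral_indicator measurableSet_Ici, ← lintegral_indicator measurableSet_Ici,
    ← lintegral_add_right_eq_self _ d, ← lintegral_const_mul _ (hg.indicator measurableSet_Ici)]
  refine lintegral_mono fun y => ?_
  by_cases hy : b ≤ y
  · simpa [indicator, hy] using hgd y
  · simp [indicator, hy]

lemma integrable_exp_neg_abs_div {l : ℝ} (hl : 0 < l) :
    Integrable fun x : ℝ => exp (-|x| / l) := by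
  have htail : IntegrableAtFilter (fun x : ℝ => exp (-l⁻¹ * x)) atTop :=
    ⟨Ioi 0, Ioi_mem_atTop 0, exp_neg_integrableOn_Ioi 0 (inv_pos.2 hl)⟩
  refine LocallyIntegrable.integrable_of_isBigO_atTop_of_norm_isNegInvariant
    (Continuous.locallyIntegrable (by fun_prop)) ?_ ?_ htail
  · filter_upwards with x
    simp [abs_neg]
  · refine EventuallyEq.isBigO ?_
    filter_upwards [eventually_ge_atTop 0] with x hx
    rw [abs_of_nonneg hx, neg_div, neg_mul, inv_mul_eq_div]

lemma isFiniteMeasure_lapMeasure {l : ℝ} (hl : 0 < l) : IsFiniteMeasure (lapMeasure l) :=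
  isFiniteMeasure_withDensity_ofReal ((integrable_exp_neg_abs_div hl).div_const _).hasFiniteIntegral

lemma exp_neg_abs_add_div_le {l : ℝ} (hl : 0 < l) (y d : ℝ) :
    exp (-|y + d| / l) / (2 * l) ≤ exp (|d| / l) * (exp (-|y| / l) / (2 * l)) := by
  rw [← mul_div_assoc, ← exp_add, ← add_div]
  have h := abs_sub (y + d) d
  rw [add_sub_cancel_right] at h
  gcongr
  linarith

lemma lapMeasure_Ici_add_le {l : ℝ} (hl : 0 < l) (b d : ℝ) :
    lapMeasure l (Ici (b + d)) ≤ ENNReal.ofReal (exp (|d| / l)) * lapMeasure l (Ici b) :=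
  withDensity_Ici_add_le (by fun_prop) (fun y => by
    rw [← ofReal_mul (exp_pos _).le]
    exact ofReal_le_ofReal (exp_neg_abs_add_div_le hl y d)) b

lemma lapMeasure_Ici_toReal_le {l : ℝ} (hl : 0 < l) (b b' : ℝ) :
    (lapMeasure l (Ici b)).toReal ≤ exp (|b - b'| / l) * (lapMeasure l (Ici b')).toReal := by
  have := isFiniteMeasure_lapMeasure hl
  have h := lapMeasure_Ici_add_le hl b' (b - b')
  rw [add_sub_cancel] at h
  simpa [toReal_mul, toReal_ofReal (exp_pos _).le] using
    ENNReal.toReal_mono (mul_ne_top ofReal_ne_top (measure_ne_top _ _)) h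

/-- **Stability of Laplace tail probabilities:** for `l > 0` and `γ, γ'` with
`ε := |γ' − γ| ≤ 1`, the tail probabilities `p = Lap(l){y ≥ lγ}` and
`p' = Lap(l){y ≥ lγ'}` satisfy `(1 − 5ε) p' ≤ p ≤ (1 + 5ε) p'`. -/
theorem laplace_tail_stability (l γ γ' : ℝ) (hl : 0 < l)
    (hε : |γ' - γ| ≤ 1) :
    (1 - 5 * |γ' - γ|) * (lapMeasure l {y : ℝ | l * γ' ≤ y}).toReal
        ≤ (lapMeasure l {y : ℝ | l * γ ≤ y}).toReal ∧
      (lapMeasure l {y : ℝ | l * γ ≤ y}).toReal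
        ≤ (1 + 5 * |γ' - γ|) * (lapMeasure l {y : ℝ | l * γ' ≤ y}).toReal := by
  have hdist (a b : ℝ) : |l * a - l * b| / l = |a - b| := by
    rw [← mul_sub, abs_mul, abs_of_pos hl, mul_div_cancel_left₀ _ hl.ne']
  have up := lapMeasure_Ici_toReal_le hl (l * γ) (l * γ')
  have down := lapMeasure_Ici_toReal_le hl (l * γ') (l * γ)
  rw [hdist, abs_sub_comm] at up
  rw [hdist] at down
  set ε := |γ' - γ|
  set p := (lapMeasure l (Ici (l * γ))).toReal
  set p' := (lapMeasure l (Ici (l * γ'))).toReal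
  have hε0 : 0 ≤ ε := abs_nonneg _
  have hexp : exp ε ≤ 1 + 2 * ε := by
    have := (abs_le.1 (abs_exp_sub_one_le (abs_le.2 ⟨by linarith, hε⟩))).2
    rw [abs_of_nonneg hε0] at this
    linarith
  constructor
  · calc (1 - 5 * ε) * p' ≤ exp (-ε) * p' := by
          gcongr
          linarith [add_one_le_exp (-ε)]
      _ ≤ p := by
          rw [exp_neg, inv_mul_le_iff₀ (exp_pos _)]
          exact down
  · calc p ≤ exp ε * p' := up
      _ ≤ (1 + 5 * ε) * p' := by
          gcongr
          linarith
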